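/- arXiv:2203.15756 — 5 statements merged into one kernel-verified Lean document; each statement's English description precedes it below -/
import Mathlib

section
/- Two directed acyclic graphs G_1 and G_2 on the same vertex set with the same skeleton that differ in the orientation of at least one edge produce different 'unrolled' graphs ICM(G_1) and ICM(G_2) with different v-structures: if X_i → X_j in G_1 and X_j → X_i in G_2, then the path X_{i;n} → X_{j;n} ↔ X_{j;m} (n ≠ m) is a v-structure (collider at X_{j;n}) in ICM(G_1) but the corresponding path X_{i;n} ← X_{j;n} ↔ X_{j;m} is not a v-structure in ICM(G_2). -/
/-- A mixed graph with directed and bidirected edges. -/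
structure MixedGraph (V : Type*) where
  dir : V → V → Prop
  bi : V → V → Prop

namespace MixedGraph

variable {V : Type*} (G : MixedGraph V)

/-- Two vertices are adjacent if they are joined by a directed or bidirected edge. -/
def Adj (p q : V) : Prop := G.dir p q ∨ G.dir q p ∨ G.bi p q ∨ G.bi q p

/-- There is an edge between `p` and `q` with an arrowhead at `q`. -/
def ArrowInto (p q : V) : Prop := G.dir p q ∨ G.bi p q ∨ G.bi q p

/-- `v` is a collider between `u` and `w`: both edges have arrowheads into `v`. -/
def IsCollider (u v w : V) : Prop := G.ArrowInto u v ∧ G.ArrowInto w v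

/-- `z` is a descendant of `v` (along directed edges, reflexively). -/
def Descendant (v z : V) : Prop := Relation.ReflTransGen G.dir v z

/-- `p 0, p 1, …, p k` is a path from `x` to `y`: consecutive vertices adjacent,
no repeated vertices. -/
def IsPath (k : ℕ) (p : ℕ → V) (x y : V) : Prop :=
  p 0 = x ∧ p k = y ∧ (∀ i < k, G.Adj (p i) (p (i + 1))) ∧
    ∀ i j, i ≤ k → j ≤ k → p i = p j → i = j

/-- The path `p 0, …, p k` is blocked by the conditioning set `Z`: some interior
vertex is a collider with no descendant in `Z`, or a non-collider in `Z`. -/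
def Blocked (Z : Set V) (k : ℕ) (p : ℕ → V) : Prop :=
  ∃ i, 0 < i ∧ i < k ∧
    ((G.IsCollider (p (i - 1)) (p i) (p (i + 1)) ∧ ∀ z ∈ Z, ¬ G.Descendant (p i) z) ∨
      (¬ G.IsCollider (p (i - 1)) (p i) (p (i + 1)) ∧ p i ∈ Z))

/-- m-separation: every path from `x` to `y` is blocked by `Z`. -/
def MSep (x y : V) (Z : Set V) : Prop :=
  ∀ (k : ℕ) (p : ℕ → V), G.IsPath k p x y → G.Blocked Z k p

/-- A v-structure `a → b ← c` (arrowheads into `b`, endpoints nonadjacent). -/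
def VStruct (a b c : V) : Prop :=
  a ≠ c ∧ ¬ G.Adj a c ∧ G.ArrowInto a b ∧ G.ArrowInto c b

end MixedGraph

/-- A relation is acyclic if it has no directed cycles. -/
def IsAcyclicRel {α : Type*} (E : α → α → Prop) : Prop :=
  ∀ a, ¬ Relation.TransGen E a a

/-- The unrolled mixed graph `ICM(G)` of a DAG with edge relation `E` on `Fin d`:
a copy of the DAG at each sample index `n`, and bidirected edges between the
copies `X_{i;n} ↔ X_{i;m}` of each variable. -/
def icm {d : ℕ} (E : Fin d → Fin d → Prop) : MixedGraph (Fin d × ℕ) where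
  dir p q := p.2 = q.2 ∧ E p.1 q.1
  bi p q := p.1 = q.1 ∧ p.2 ≠ q.2

/-! For distinct variables `i ≠ j` and distinct samples `n ≠ m`, the endpoints `X_{i;n}` and
`X_{j;m}` of `ICM(E)` are nonadjacent and the bidirected edge `X_{j;m} ↔ X_{j;n}` always has an
arrowhead at `X_{j;n}`, so the triple is a v-structure exactly when `i → j` in `E`. Acyclicity of
`G₂` gives `i ≠ j` and excludes `i → j` there, while `i → j` holds in `G₁`. -/

theorem IsAcyclicRel.ne {α : Type*} {E : α → α → Prop} (hE : IsAcyclicRel E) {a b : α}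
    (hab : E a b) : a ≠ b := by
  rintro rfl
  exact hE a (.single hab)

theorem IsAcyclicRel.asymm {α : Type*} {E : α → α → Prop} (hE : IsAcyclicRel E) {a b : α}
    (hab : E a b) : ¬ E b a :=
  fun hba => hE a (.head hab (.single hba))

theorem icm_adj_iff {d : ℕ} (E : Fin d → Fin d → Prop) (p q : Fin d × ℕ) :
    (icm E).Adj p q ↔ (p.2 = q.2 ∧ (E p.1 q.1 ∨ E q.1 p.1)) ∨ (p.1 = q.1 ∧ p.2 ≠ q.2) := by
  simp only [MixedGraph.Adj, icm, eq_comm (a := q.1), eq_comm (a := q.2), ne_eq]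
  tauto

theorem icm_arrowInto_iff {d : ℕ} (E : Fin d → Fin d → Prop) (p q : Fin d × ℕ) :
    (icm E).ArrowInto p q ↔ (p.2 = q.2 ∧ E p.1 q.1) ∨ (p.1 = q.1 ∧ p.2 ≠ q.2) := by
  simp only [MixedGraph.ArrowInto, icm, eq_comm (a := q.1), eq_comm (a := q.2), ne_eq]
  tauto

theorem icm_vStruct_iff {d : ℕ} (E : Fin d → Fin d → Prop) {i j : Fin d} (hij : i ≠ j)
    {n m : ℕ} (hnm : n ≠ m) :
    (icm E).VStruct (i, n) (j, n) (j, m) ↔ E i j := by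
  simp only [MixedGraph.VStruct, icm_adj_iff, icm_arrowInto_iff, ne_eq, Prod.mk.injEq]
  tauto

theorem stmt12_general {d : ℕ} (E₁ E₂ : Fin d → Fin d → Prop)
    (h₂ : IsAcyclicRel E₂)
    (i j : Fin d) (hij : E₁ i j) (hji : E₂ j i) (n m : ℕ) (hnm : n ≠ m) :
    (icm E₁).VStruct (i, n) (j, n) (j, m) ∧
      ¬ (icm E₂).VStruct (i, n) (j, n) (j, m) := by
  have hne : i ≠ j := (h₂.ne hji).symm
  exact ⟨(icm_vStruct_iff E₁ hne hnm).2 hij,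
    fun h => h₂.asymm hji ((icm_vStruct_iff E₂ hne hnm).1 h)⟩

/-- Reversing an edge `i → j` of a DAG (keeping the skeleton) changes the
v-structures of the unrolled graph: `X_{i;n} → X_{j;n} ↔ X_{j;m}` is a
v-structure in `ICM(G₁)` but the corresponding triple is not one in `ICM(G₂)`. -/
theorem stmt12 {d : ℕ} (E₁ E₂ : Fin d → Fin d → Prop)
    (h₁ : IsAcyclicRel E₁) (h₂ : IsAcyclicRel E₂)
    (hskel : ∀ a b, (E₁ a b ∨ E₁ b a) ↔ (E₂ a b ∨ E₂ b a))
    (i j : Fin d) (hij : E₁ i j) (hji : E₂ j i) (n m : ℕ) (hnm : n ≠ m) :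
    (icm E₁).VStruct (i, n) (j, n) (j, m) ∧
      ¬ (icm E₂).VStruct (i, n) (j, n) (j, m) :=
  stmt12_general E₁ E₂ h₂ i j hij hji n m hnm
end

section
/- For any two DAGs G_1 and G_2 on the same set of d variables, the unrolled mixed graphs satisfy: ICM(G_1) and ICM(G_2) encode the same conditional independence relations (via m-separation) if and only if G_1 = G_2. In other words, the map G ↦ I(ICM(G)) is injective on DAGs. -/
/-!
If `i → j` in `G₁`, then `X_{i;0}` and `X_{j;0}` are adjacent in `ICM(G₁)`, so no set separates
them, and `X_{i;0} → X_{j;0} ↔ X_{j;1}` is a collider path, so no set containing `X_{j;0}`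
separates `X_{i;0}` from `X_{j;1}`. In `ICM(G₂)` one of these separations exists unless `i → j`
in `G₂` as well: if `i` and `j` are nonadjacent in `G₂`, the sample-`0` ancestors of `i` and `j`
separate `X_{i;0}` from `X_{j;0}`; if `j → i` in `G₂`, the ancestral closure of
`{X_{i;0}, X_{j;1}}`, which contains `X_{j;0}`, separates `X_{i;0}` from `X_{j;1}`.

Both separations rest on one fact about mixed graphs: if `A` is an ancestral set containing `x`
and `y`, every interior vertex of a path from `x` to `y` that is not blocked by `A \ {x, y}` is
a collider in `A`. In `ICM(G)` two consecutive colliders are joined by a bidirected edge, and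
since `A` meets only samples `0` and `1`, only paths of length at most `3` remain to be checked.
-/

namespace MixedGraph

variable {V : Type*} {M : MixedGraph V}

variable (M) in
def IsAncestral (A : Set V) : Prop :=
  ∀ ⦃v w : V⦄, M.dir v w → w ∈ A → v ∈ A

theorem IsAncestral.mem_of_descendant {A : Set V} (hA : M.IsAncestral A) {v w : V}
    (h : M.Descendant v w) (hw : w ∈ A) : v ∈ A := by
  induction h using Relation.ReflTransGen.head_induction_on with
  | refl => exact hw
  | head hvu _ ih => exact hA hvu ih

theorem ArrowInto.adj {p q : V} (h : M.ArrowInto p q) : M.Adj p q := by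
  unfold ArrowInto at h; unfold Adj; tauto

theorem Adj.symm {p q : V} (h : M.Adj p q) : M.Adj q p := by
  unfold Adj at *; tauto

theorem Adj.arrowInto_of_not_dir {p q : V} (h : M.Adj p q) (hn : ¬ M.dir q p) :
    M.ArrowInto p q := by
  unfold Adj at h; unfold ArrowInto; tauto

section Blocking

variable {Z : Set V} {k : ℕ} {p : ℕ → V}

theorem exists_descendant_of_not_blocked (hb : ¬ M.Blocked Z k p) {i : ℕ} (hi : 0 < i)
    (hik : i < k) (hc : M.IsCollider (p (i - 1)) (p i) (p (i + 1))) :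
    ∃ z ∈ Z, M.Descendant (p i) z := by
  by_contra! h
  exact hb ⟨i, hi, hik, Or.inl ⟨hc, h⟩⟩

theorem isCollider_of_mem_of_not_blocked (hb : ¬ M.Blocked Z k p) {i : ℕ} (hi : 0 < i)
    (hik : i < k) (hZ : p i ∈ Z) : M.IsCollider (p (i - 1)) (p i) (p (i + 1)) := by
  by_contra hc
  exact hb ⟨i, hi, hik, Or.inr ⟨hc, hZ⟩⟩

variable {A : Set V} {x y : V}

theorem IsPath.mem_of_not_blocked (hp : M.IsPath k p x y) (hA : M.IsAncestral A) (hx : x ∈ A)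
    (hy : y ∈ A) (hZ : Z ⊆ A) (hb : ¬ M.Blocked Z k p) : ∀ t ≤ k, p t ∈ A := by
  obtain ⟨rfl, rfl, hadj, -⟩ := hp
  -- An arrowhead into a vertex outside `A` cannot stop at a collider (colliders have
  -- descendants in `Z ⊆ A`), so it is passed on along the path until it reaches `p k ∈ A`.
  have propagate : ∀ n s, s + 1 + n = k → M.ArrowInto (p s) (p (s + 1)) → p (s + 1) ∉ A →
      False := by
    intro n
    induction n with
    | zero => intro s hs _ hout; exact hout (hs ▸ hy)
    | succ n ih =>
      intro s hs hin hout
      have hcol : ¬ M.IsCollider (p s) (p (s + 1)) (p (s + 1 + 1)) := fun hc => by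
        obtain ⟨z, hz, hdesc⟩ :=
          exists_descendant_of_not_blocked hb (Nat.succ_pos s) (by omega) hc
        exact hout (hA.mem_of_descendant hdesc (hZ hz))
      have hdir : M.dir (p (s + 1)) (p (s + 1 + 1)) := by
        have hnext := hadj (s + 1) (by omega)
        unfold IsCollider at hcol; unfold Adj at hnext; unfold ArrowInto at hin hcol
        tauto
      exact ih (s + 1) (by omega) (Or.inl hdir) fun hA' => hout (hA hdir hA')
  intro t
  induction t with
  | zero => exact fun _ => hx
  | succ t ih =>
    intro ht
    by_contra hout
    have hback : ¬ M.dir (p (t + 1)) (p t) := fun h => hout (hA h (ih (by omega)))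
    exact propagate (k - (t + 1)) t (by omega) ((hadj t ht).arrowInto_of_not_dir hback) hout

theorem IsPath.isCollider_of_not_blocked (hp : M.IsPath k p x y) (hA : M.IsAncestral A)
    (hx : x ∈ A) (hy : y ∈ A) (hb : ¬ M.Blocked (A \ {x, y}) k p) {t : ℕ} (ht : 0 < t)
    (htk : t < k) : p t ∈ A ∧ M.IsCollider (p (t - 1)) (p t) (p (t + 1)) := by
  have hmem := hp.mem_of_not_blocked hA hx hy Set.sdiff_subset hb t htk.le
  obtain ⟨hp0, hpk, -, hinj⟩ := hp
  have hx' : p t ≠ x := fun h => by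
    have := hinj t 0 htk.le k.zero_le (h.trans hp0.symm); omega
  have hy' : p t ≠ y := fun h => by
    have := hinj t k htk.le le_rfl (h.trans hpk.symm); omega
  exact ⟨hmem, isCollider_of_mem_of_not_blocked hb ht htk ⟨hmem, by simp [hx', hy']⟩⟩

end Blocking

theorem not_msep_of_adj {x y : V} (h : M.Adj x y) (hxy : x ≠ y) (Z : Set V) :
    ¬ M.MSep x y Z := by
  intro hsep
  have hp : M.IsPath 1 (fun t => if t = 0 then x else y) x y := by
    refine ⟨rfl, rfl, fun t ht => ?_, fun a b ha hb hab => ?_⟩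
    · interval_cases t; simpa using h
    · interval_cases a <;> interval_cases b <;> simp_all
  obtain ⟨t, ht, htk, -⟩ := hsep 1 _ hp
  omega

theorem not_msep_of_isCollider {x z y : V} (hc : M.IsCollider x z y) (hxz : x ≠ z)
    (hzy : z ≠ y) (hxy : x ≠ y) {Z : Set V} (hz : z ∈ Z) : ¬ M.MSep x y Z := by
  intro hsep
  have hp : M.IsPath 2 (fun t => if t = 0 then x else if t = 1 then z else y) x y := by
    refine ⟨rfl, rfl, fun t ht => ?_, fun a b ha hb hab => ?_⟩
    · interval_cases t
      · exact hc.1.adj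
      · exact hc.2.adj.symm
    · interval_cases a <;> interval_cases b <;> simp_all [eq_comm]
  obtain ⟨t, ht, htk, hblk⟩ := hsep 2 _ hp
  obtain rfl : t = 1 := by omega
  rcases hblk with ⟨-, hnd⟩ | ⟨hnc, -⟩
  · exact hnd z hz .refl
  · exact hnc hc

end MixedGraph

open MixedGraph Relation

theorem IsAcyclicRel.ne_of_rel {α : Type*} {r : α → α → Prop} (hr : IsAcyclicRel r) {a b : α}
    (h : r a b) : a ≠ b := by
  rintro rfl
  exact hr a (.single h)

section Icm

variable {d : ℕ} {E : Fin d → Fin d → Prop} {a b : Fin d × ℕ}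

theorem icm_rel_of_arrowInto (h : (icm E).ArrowInto a b) (hs : a.2 = b.2) : E a.1 b.1 := by
  rcases h with h | h | h
  · exact h.2
  · exact absurd hs h.2
  · exact absurd hs.symm h.2

theorem icm_fst_eq_of_arrowInto (h : (icm E).ArrowInto a b) (hs : a.2 ≠ b.2) : a.1 = b.1 := by
  rcases h with h | h | h
  · exact absurd h.1 hs
  · exact h.1
  · exact h.1.symm

theorem icm_bi_of_arrowInto_of_arrowInto (hE : IsAcyclicRel E) (hab : (icm E).ArrowInto a b)
    (hba : (icm E).ArrowInto b a) : a.1 = b.1 ∧ a.2 ≠ b.2 := by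
  by_cases hs : a.2 = b.2
  · exact (hE a.1 (.head (icm_rel_of_arrowInto hab hs)
      (.single (icm_rel_of_arrowInto hba hs.symm)))).elim
  · exact ⟨icm_fst_eq_of_arrowInto hab hs, hs⟩

theorem exists_msep_icm_of_not_adj (hE : IsAcyclicRel E) {i j : Fin d} (hij : i ≠ j)
    (h₁ : ¬ E i j) (h₂ : ¬ E j i) : ∃ Z, (icm E).MSep (i, 0) (j, 0) Z := by
  set A : Set (Fin d × ℕ) := {q | q.2 = 0 ∧ (ReflTransGen E q.1 i ∨ ReflTransGen E q.1 j)}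
  have hA : (icm E).IsAncestral A := fun v w hvw hw =>
    ⟨hvw.1.trans hw.1, hw.2.imp (.head hvw.2) (.head hvw.2)⟩
  refine ⟨A \ {(i, 0), (j, 0)}, fun k p hp => ?_⟩
  by_contra hb
  have hint {t : ℕ} (ht : 0 < t) (htk : t < k) :=
    hp.isCollider_of_not_blocked hA ⟨rfl, .inl .refl⟩ ⟨rfl, .inr .refl⟩ hb ht htk
  have hk : k ≤ 2 := by
    by_contra! hk
    obtain ⟨⟨h1, -⟩, hc1⟩ := hint one_pos (by omega)
    obtain ⟨⟨h2, -⟩, hc2⟩ := hint two_pos (by omega)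
    exact (icm_bi_of_arrowInto_of_arrowInto hE hc2.1 hc1.2).2 (h1.trans h2.symm)
  obtain ⟨hp0, hpk, hadj, -⟩ := hp
  interval_cases k
  · exact hij (congrArg Prod.fst (hp0.symm.trans hpk))
  · have h01 := hadj 0 one_pos
    rw [hp0, hpk] at h01
    unfold Adj icm at h01
    simp_all
  · obtain ⟨⟨h1, hanc⟩, hin, hout⟩ := hint one_pos one_lt_two
    rw [Nat.sub_self, hp0] at hin
    rw [hpk] at hout
    have hic : E i (p 1).1 := icm_rel_of_arrowInto hin h1.symm
    have hjc : E j (p 1).1 := icm_rel_of_arrowInto hout h1.symm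
    rcases hanc with hci | hcj
    · exact hE i (.head' hic hci)
    · exact hE j (.head' hjc hcj)

theorem exists_msep_icm_of_rel (hE : IsAcyclicRel E) {i j : Fin d} (hji : E j i) :
    ∃ Z, ((j, 0) : Fin d × ℕ) ∈ Z ∧ (icm E).MSep (i, 0) (j, 1) Z := by
  have hij : i ≠ j := (hE.ne_of_rel hji).symm
  have hnij : ¬ ReflTransGen E i j := fun h => hE i (.tail' h hji)
  set A : Set (Fin d × ℕ) :=
    {q | (q.2 = 0 ∧ ReflTransGen E q.1 i) ∨ (q.2 = 1 ∧ ReflTransGen E q.1 j)}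
  have hA : (icm E).IsAncestral A := fun v w hvw hw =>
    hw.imp (fun hw => ⟨hvw.1.trans hw.1, .head hvw.2 hw.2⟩)
      (fun hw => ⟨hvw.1.trans hw.1, .head hvw.2 hw.2⟩)
  refine ⟨A \ {(i, 0), (j, 1)}, ⟨.inl ⟨rfl, .single hji⟩, by simp [hij.symm]⟩, fun k p hp => ?_⟩
  by_contra hb
  have hint {t : ℕ} (ht : 0 < t) (htk : t < k) :=
    hp.isCollider_of_not_blocked hA (.inl ⟨rfl, .refl⟩) (.inr ⟨rfl, .refl⟩) hb ht htk
  have hsample {t : ℕ} (ht : 0 < t) (htk : t < k) : (p t).2 = 0 ∨ (p t).2 = 1 :=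
    (hint ht htk).1.imp And.left And.left
  obtain ⟨hp0, hpk, hadj, hinj⟩ := hp
  -- Interior vertices are joined by bidirected edges and lie in samples `0` and `1`,
  -- so a third interior vertex would repeat the first.
  have hk : k ≤ 3 := by
    by_contra! hk
    have e12 : (p 1).1 = (p 2).1 ∧ (p 1).2 ≠ (p 2).2 := icm_bi_of_arrowInto_of_arrowInto hE
      (hint two_pos (by omega)).2.1 (hint one_pos (by omega)).2.2
    have e23 : (p 2).1 = (p 3).1 ∧ (p 2).2 ≠ (p 3).2 := icm_bi_of_arrowInto_of_arrowInto hE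
      (hint three_pos (by omega)).2.1 (hint two_pos (by omega)).2.2
    have hs1 := hsample one_pos (by omega)
    have hs2 := hsample two_pos (by omega)
    have hs3 := hsample three_pos (by omega)
    have h13 : p 1 = p 3 := Prod.ext (e12.1.trans e23.1) (by omega)
    have := hinj 1 3 (by omega) (by omega) h13
    omega
  interval_cases k
  · exact absurd (congrArg Prod.snd (hp0.symm.trans hpk)) (by simp)
  · have h01 := hadj 0 one_pos
    rw [hp0, hpk] at h01
    unfold Adj icm at h01
    simp_all
  · obtain ⟨hmem, hin, hout⟩ := hint one_pos one_lt_two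
    rw [Nat.sub_self, hp0] at hin
    rw [hpk] at hout
    rcases hmem with ⟨h1, -⟩ | ⟨h1, hanc⟩
    · have hj : j = (p 1).1 := icm_fst_eq_of_arrowInto hout (by simp [h1])
      exact hE i (.head (icm_rel_of_arrowInto hin h1.symm) (.single (hj ▸ hji)))
    · have hi : i = (p 1).1 := icm_fst_eq_of_arrowInto hin (by simp [h1])
      exact hnij (hi ▸ hanc)
  · obtain ⟨hmem1, hin, h21⟩ := hint one_pos (by omega)
    obtain ⟨hmem2, h12, hout⟩ := hint two_pos (by omega)
    obtain ⟨hfst, hsnd⟩ : (p 1).1 = (p 2).1 ∧ (p 1).2 ≠ (p 2).2 :=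
      icm_bi_of_arrowInto_of_arrowInto hE h12 h21
    rw [Nat.sub_self, hp0] at hin
    change (icm E).ArrowInto (p 3) (p 2) at hout
    rw [hpk] at hout
    rcases hmem1 with ⟨h1, -⟩ | ⟨h1, -⟩
    · have hanc : ReflTransGen E (p 2).1 j := by
        rcases hmem2 with ⟨h2, -⟩ | ⟨-, h⟩
        · exact absurd (h1.trans h2.symm) hsnd
        · exact h
      exact hE i (.head (icm_rel_of_arrowInto hin h1.symm) (.tail' (hfst ▸ hanc) hji))
    · have h2 : (p 2).2 = 0 := by
        rcases hmem2 with ⟨h2, -⟩ | ⟨h2, -⟩ <;> omega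
      have hj : j = (p 2).1 := icm_fst_eq_of_arrowInto hout (by simp [h2])
      have h13 : p 1 = p 3 := by rw [hpk]; exact Prod.ext (hfst.trans hj.symm) h1
      have := hinj 1 3 (by omega) le_rfl h13
      omega

theorem rel_of_forall_msep_iff {E₁ E₂ : Fin d → Fin d → Prop} (h₁ : IsAcyclicRel E₁)
    (h₂ : IsAcyclicRel E₂) (h : ∀ x y Z, (icm E₁).MSep x y Z ↔ (icm E₂).MSep x y Z)
    {i j : Fin d} (hij : E₁ i j) : E₂ i j := by
  have hne := h₁.ne_of_rel hij
  by_contra hn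
  by_cases hji : E₂ j i
  · obtain ⟨Z, hjZ, hsep⟩ := exists_msep_icm_of_rel h₂ hji
    have hc : (icm E₁).IsCollider (i, 0) (j, 0) (j, 1) :=
      ⟨.inl ⟨rfl, hij⟩, .inr (.inl ⟨rfl, by simp⟩)⟩
    exact not_msep_of_isCollider hc (by simp [hne]) (by simp) (by simp) hjZ
      ((h (i, 0) (j, 1) Z).2 hsep)
  · obtain ⟨Z, hsep⟩ := exists_msep_icm_of_not_adj h₂ hne hn hji
    have hadj : (icm E₁).Adj (i, 0) (j, 0) := .inl ⟨rfl, hij⟩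
    exact not_msep_of_adj hadj (fun he => hne (congrArg Prod.fst he)) Z ((h _ _ Z).2 hsep)

end Icm

/-- Identifiability: two DAGs have unrolled graphs encoding the same m-separation
statements iff the DAGs are equal; i.e. `G ↦ I(ICM(G))` is injective on DAGs. -/
theorem stmt13 {d : ℕ} (E₁ E₂ : Fin d → Fin d → Prop)
    (h₁ : IsAcyclicRel E₁) (h₂ : IsAcyclicRel E₂) :
    (∀ (x y : Fin d × ℕ) (Z : Set (Fin d × ℕ)),
        (icm E₁).MSep x y Z ↔ (icm E₂).MSep x y Z) ↔ E₁ = E₂ := by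
  refine ⟨fun h => ?_, fun h _ _ _ => h ▸ Iff.rfl⟩
  funext i j
  exact propext ⟨rel_of_forall_msep_iff h₁ h₂ h,
    rel_of_forall_msep_iff h₂ h₁ fun x y Z => (h x y Z).symm⟩
end

section
/- In the unrolled graph of a DAG G with latent variables (θ_i → X_{i;n} for every sample index n, plus a copy of G at each n), if node X_i has an outgoing edge X_i → X_k in G for some k ≠ i, then for any two sample indices n ≠ m, the path X_{i;n} → X_{k;n} ← θ_k → X_{k;m} is active (not blocked) given the conditioning set {X_{l;n} : l ≠ i}; hence X_{i;n} and X_{k;m} are not d-separated given that set. -/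
/-- The unrolled latent-variable DAG of `E`: observed nodes `X_{i;n}` and latent
nodes `θ_i`, with `θ_i → X_{i;n}` for all `n` and a copy of `E` at each `n`. -/
def unrolled {d : ℕ} (E : Fin d → Fin d → Prop) :
    MixedGraph ((Fin d × ℕ) ⊕ Fin d) where
  dir p q :=
    (∃ i n, p = Sum.inr i ∧ q = Sum.inl (i, n)) ∨
      (∃ i j n, E i j ∧ p = Sum.inl (i, n) ∧ q = Sum.inl (j, n))
  bi _ _ := False

namespace MixedGraph

variable {V : Type*} (G : MixedGraph V)

theorem not_mSep_of_isPath_of_not_blocked {x y : V} {Z : Set V} {k : ℕ} {p : ℕ → V}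
    (hp : G.IsPath k p x y) (hb : ¬ G.Blocked Z k p) : ¬ G.MSep x y Z :=
  fun hsep => hb (hsep k p hp)

end MixedGraph

namespace unrolled

variable {d : ℕ} {E : Fin d → Fin d → Prop}

theorem dir_latent (i : Fin d) (n : ℕ) : (unrolled E).dir (.inr i) (.inl (i, n)) :=
  Or.inl ⟨i, n, rfl, rfl⟩

theorem dir_of_rel {i j : Fin d} (h : E i j) (n : ℕ) :
    (unrolled E).dir (.inl (i, n)) (.inl (j, n)) :=
  Or.inr ⟨i, j, n, h, rfl, rfl⟩

theorem not_arrowInto_latent (p : (Fin d × ℕ) ⊕ Fin d) (k : Fin d) :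
    ¬ (unrolled E).ArrowInto p (.inr k) := by
  simp [MixedGraph.ArrowInto, unrolled]

/-- The path `X_{i;n} → X_{k;n} ← θ_k → X_{k;m}`, as a function of the position `t ≤ 3`. -/
def latentColliderPath (i k : Fin d) (n m : ℕ) : ℕ → (Fin d × ℕ) ⊕ Fin d :=
  fun t => if t = 0 then Sum.inl (i, n) else if t = 1 then Sum.inl (k, n)
    else if t = 2 then Sum.inr k else Sum.inl (k, m)

theorem isPath_latentColliderPath {i k : Fin d} (hik : E i k) (hne : i ≠ k) {n m : ℕ}
    (hnm : n ≠ m) :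
    (unrolled E).IsPath 3 (latentColliderPath i k n m) (.inl (i, n)) (.inl (k, m)) := by
  refine ⟨rfl, rfl, fun t ht => ?_, fun a b ha hb hab => ?_⟩
  · interval_cases t
    · exact Or.inl (dir_of_rel hik n)
    · exact Or.inr (Or.inl (dir_latent k n))
    · exact Or.inl (dir_latent k m)
  · interval_cases a <;> interval_cases b <;> simp_all [latentColliderPath, eq_comm]

theorem not_blocked_latentColliderPath {i k : Fin d} (hik : E i k) (hne : i ≠ k) (n m : ℕ) :
    ¬ (unrolled E).Blocked {p | ∃ l, l ≠ i ∧ p = .inl (l, n)} 3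
      (latentColliderPath i k n m) := by
  -- `X_{k;n}` is a collider lying in the conditioning set itself; `θ_k` has no parents, so it
  -- is an unobserved non-collider.
  rintro ⟨t, ht0, ht3, hblock⟩
  interval_cases t
  · have hcollider : (unrolled E).IsCollider (.inl (i, n)) (.inl (k, n)) (.inr k) :=
      ⟨Or.inl (dir_of_rel hik n), Or.inl (dir_latent k n)⟩
    rcases hblock with ⟨-, hno_desc⟩ | ⟨hnot_collider, -⟩
    · exact hno_desc _ ⟨k, hne.symm, rfl⟩ .refl
    · exact hnot_collider hcollider
  · rcases hblock with ⟨⟨-, hinto⟩, -⟩ | ⟨-, hmem⟩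
    · exact not_arrowInto_latent _ _ hinto
    · simp [latentColliderPath] at hmem

end unrolled

theorem stmt15_general {d : ℕ} (E : Fin d → Fin d → Prop)
    (i k : Fin d) (hik : E i k) (hne : i ≠ k) (n m : ℕ) (hnm : n ≠ m)
    (Z : Set ((Fin d × ℕ) ⊕ Fin d))
    (hZ : Z = {p | ∃ l, l ≠ i ∧ p = Sum.inl (l, n)}) :
    ¬ (unrolled E).Blocked Z 3
        (fun t => if t = 0 then Sum.inl (i, n) else if t = 1 then Sum.inl (k, n)
          else if t = 2 then Sum.inr k else Sum.inl (k, m)) ∧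
      ¬ (unrolled E).MSep (Sum.inl (i, n)) (Sum.inl (k, m)) Z := by
  subst hZ
  have hactive := unrolled.not_blocked_latentColliderPath hik hne n m
  exact ⟨hactive, (unrolled E).not_mSep_of_isPath_of_not_blocked
    (unrolled.isPath_latentColliderPath hik hne hnm) hactive⟩

/-- If `X_i → X_k` in `G`, then the path
`X_{i;n} → X_{k;n} ← θ_k → X_{k;m}` is active given `{X_{l;n} : l ≠ i}`; hence
`X_{i;n}` and `X_{k;m}` are not d-separated given that set. -/
theorem stmt15 {d : ℕ} (E : Fin d → Fin d → Prop) (hE : IsAcyclicRel E)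
    (i k : Fin d) (hik : E i k) (hne : i ≠ k) (n m : ℕ) (hnm : n ≠ m)
    (Z : Set ((Fin d × ℕ) ⊕ Fin d))
    (hZ : Z = {p | ∃ l, l ≠ i ∧ p = Sum.inl (l, n)}) :
    ¬ (unrolled E).Blocked Z 3
        (fun t => if t = 0 then Sum.inl (i, n) else if t = 1 then Sum.inl (k, n)
          else if t = 2 then Sum.inr k else Sum.inl (k, m)) ∧
      ¬ (unrolled E).MSep (Sum.inl (i, n)) (Sum.inl (k, m)) Z :=
  stmt15_general E i k hik hne n m hnm Z hZ
end

section
/- Let (X_n, Y_n)_{n∈ℕ} be a sequence of {0,1}-valued random variable pairs such that there exist independent random variables θ ∈ [0,1] with law μ and ψ = (ψ_0, ψ_1) ∈ [0,1]² with law ν satisfying, for all N and all (x_n,y_n): P(X_1=x_1,Y_1=y_1,...,X_N=x_N,Y_N=y_N) = ∫∫ Π_{n=1}^N p(y_n|x_n,ψ) p(x_n|θ) dμ(θ) dν(ψ), where p(x|θ)=θ^x(1-θ)^{1-x} and p(y|x,ψ)=ψ_x^y(1-ψ_x)^{1-y}. Then (a) the sequence of pairs is exchangeable, and (b) for every n,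 (Y_1,...,Y_n) is conditionally independent of X_{n+1} given (X_1,...,X_n). -/
/-!
Given the representation, the pairs `(Xₖ, Yₖ)` are a mixture, over `φ = (θ, ψ) ∼ ν₁ ⊗ ν₂`,
of i.i.d. sequences on the alphabet `{0,1}²`, so the probability of any cylinder event
`{(Xₖ, Yₖ) ∈ sₖ for k < m}` is `∫ ∏ₖ ∑_{p ∈ sₖ} L(p | φ)`. Permuting the coordinates only
permutes the factors, which gives exchangeability. Summing out the unconstrained `Y`'s gives
`P(Y_{[n]} = y, X_{[m]} = x) = (∫ ∏_{k<m} p(xₖ | θ) dν₁) (∫ ∏_{k<n} p(yₖ | xₖ, ψ) dν₂)`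
by independence of `θ` and `ψ`, and then both sides of the conditional independence identity
are the same product of three such integrals.

Nothing makes the events measurable, so `μ` is only an outer measure on them; it is still
additive on unions of the atoms `{X_{[m]} = x, Y_{[m]} = y}`, because these cover the space and
their probabilities add up to one.
-/

open MeasureTheory Finset

namespace CausalDeFinetti

theorem measure_biUnion_eq_sum_of_cover {Ω ι : Type*} [MeasurableSpace Ω] {μ : Measure Ω}
    [IsFiniteMeasure μ] {A : ι → Set Ω} {V T : Finset ι} (hcover : ∀ ω, ∃ i ∈ V, ω ∈ A i)
    (hsum : ∑ i ∈ V, μ (A i) ≤ μ Set.univ) (hT : T ⊆ V) :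
    μ (⋃ i ∈ T, A i) = ∑ i ∈ T, μ (A i) := by
  classical
  set U := ⋃ i ∈ T, A i
  refine le_antisymm (measure_biUnion_finset_le T A) ?_
  have hcompl : μ Uᶜ ≤ ∑ i ∈ V \ T, μ (A i) := by
    refine (measure_mono fun ω hω => ?_).trans (measure_biUnion_finset_le _ _)
    obtain ⟨i, hiV, hi⟩ := hcover ω
    exact Set.mem_biUnion (mem_sdiff.2 ⟨hiV, fun hiT => hω (Set.mem_biUnion hiT hi)⟩) hi
  have hfin : ∑ i ∈ V \ T, μ (A i) ≠ ⊤ :=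
    ne_top_of_le_ne_top (measure_ne_top μ Set.univ)
      ((sum_le_sum_of_subset sdiff_subset).trans hsum)
  refine (ENNReal.add_le_add_iff_left hfin).1 ?_
  calc ∑ i ∈ V \ T, μ (A i) + ∑ i ∈ T, μ (A i) = ∑ i ∈ V, μ (A i) := sum_sdiff hT
    _ ≤ μ U + μ Uᶜ := hsum.trans (measure_univ_le_add_compl U)
    _ ≤ ∑ i ∈ V \ T, μ (A i) + μ U := by rw [add_comm]; gcongr

section Mixture

variable {Ω Φ ι α : Type*} [MeasurableSpace Ω] [MeasurableSpace Φ] [Fintype ι]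
  {μ : Measure Ω} {ρ : Measure Φ} {F : Finset α} {L : Φ → α → ℝ}

theorem integrable_prod_of_ae_mem_Icc [IsFiniteMeasure ρ]
    (hL_meas : ∀ a, Measurable fun φ => L φ a)
    (hL : ∀ᵐ φ ∂ρ, ∀ a ∈ F, L φ a ∈ Set.Icc (0 : ℝ) 1) {v : ι → α} (hv : ∀ i, v i ∈ F) :
    Integrable (fun φ => ∏ i, L φ (v i)) ρ := by
  refine .of_bound (Finset.measurable_prod _ fun i _ => hL_meas (v i)).aestronglyMeasurable 1 ?_
  filter_upwards [hL] with φ hφ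
  rw [Real.norm_of_nonneg (prod_nonneg fun i _ => (hφ _ (hv i)).1)]
  exact prod_le_one (fun i _ => (hφ _ (hv i)).1) fun i _ => (hφ _ (hv i)).2

theorem measure_forall_mem_eq_integral [DecidableEq ι] [IsProbabilityMeasure μ]
    [IsProbabilityMeasure ρ] {Z : ι → Ω → α} (hZ : ∀ i ω, Z i ω ∈ F)
    (hL_meas : ∀ a, Measurable fun φ => L φ a) (hL_nonneg : ∀ᵐ φ ∂ρ, ∀ a ∈ F, 0 ≤ L φ a)
    (hL_sum : ∀ᵐ φ ∂ρ, ∑ a ∈ F, L φ a = 1)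
    (hrep : ∀ v : ι → α, (∀ i, v i ∈ F) →
      μ {ω | ∀ i, Z i ω = v i} = ENNReal.ofReal (∫ φ, ∏ i, L φ (v i) ∂ρ))
    (s : ι → Finset α) (hs : ∀ i, s i ⊆ F) :
    μ {ω | ∀ i, Z i ω ∈ s i} = ENNReal.ofReal (∫ φ, ∏ i, ∑ a ∈ s i, L φ a ∂ρ) := by
  have hL : ∀ᵐ φ ∂ρ, ∀ a ∈ F, L φ a ∈ Set.Icc (0 : ℝ) 1 := by
    filter_upwards [hL_nonneg, hL_sum] with φ h0 h1 a ha
    exact ⟨h0 a ha, h1 ▸ single_le_sum h0 ha⟩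
  have hatoms : ∀ s : ι → Finset α, (∀ i, s i ⊆ F) →
      ∑ v ∈ Fintype.piFinset s, μ {ω | ∀ i, Z i ω = v i} =
        ENNReal.ofReal (∫ φ, ∏ i, ∑ a ∈ s i, L φ a ∂ρ) := by
    intro s hs
    have hvF : ∀ v ∈ Fintype.piFinset s, ∀ i, v i ∈ F :=
      fun v hv i => hs i (Fintype.mem_piFinset.1 hv i)
    simp_rw [prod_univ_sum]
    rw [integral_finsetSum _ fun v hv => integrable_prod_of_ae_mem_Icc hL_meas hL (hvF v hv),
      ENNReal.ofReal_sum_of_nonneg fun v hv => integral_nonneg_of_ae <| hL.mono fun φ hφ =>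
        prod_nonneg fun i _ => (hφ _ (hvF v hv i)).1]
    exact sum_congr rfl fun v hv => hrep v (hvF v hv)
  have htotal : ∑ v ∈ Fintype.piFinset fun _ => F, μ {ω | ∀ i, Z i ω = v i} ≤ μ Set.univ := by
    rw [hatoms _ fun _ => subset_rfl, measure_univ,
      integral_congr_ae (hL_sum.mono fun φ h => by simp only [h, prod_const_one]; rfl)]
    simp
  have hunion : {ω | ∀ i, Z i ω ∈ s i} = ⋃ v ∈ Fintype.piFinset s, {ω | ∀ i, Z i ω = v i} := by
    ext ω
    simp only [Set.mem_iUnion, Fintype.mem_piFinset, exists_prop]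
    exact ⟨fun h => ⟨fun i => Z i ω, h, fun i => rfl⟩, fun ⟨v, hv, hZv⟩ i => hZv i ▸ hv i⟩
  rw [hunion, measure_biUnion_eq_sum_of_cover (A := fun v => {ω | ∀ i, Z i ω = v i})
    (fun ω => ⟨fun i => Z i ω, Fintype.mem_piFinset.2 fun i => hZ i ω, fun i => rfl⟩) htotal
    (Fintype.piFinset_subset _ _ hs), hatoms s hs]

theorem measure_comp_perm_eq {Z : ι → Ω → α} (hZ : ∀ i ω, Z i ω ∈ F)
    (hrep : ∀ v : ι → α, (∀ i, v i ∈ F) →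
      μ {ω | ∀ i, Z i ω = v i} = ENNReal.ofReal (∫ φ, ∏ i, L φ (v i) ∂ρ))
    (π : Equiv.Perm ι) (v : ι → α) :
    μ {ω | ∀ i, Z (π i) ω = v i} = μ {ω | ∀ i, Z i ω = v i} := by
  by_cases hv : ∀ i, v i ∈ F
  · have hset : {ω | ∀ i, Z (π i) ω = v i} = {ω | ∀ i, Z i ω = v (π.symm i)} := by
      ext ω
      exact ⟨fun h i => by simpa using h (π.symm i), fun h i => by simpa using h (π i)⟩
    rw [hset, hrep _ fun i => hv _, hrep v hv]
    simp_rw [fun φ => Equiv.prod_comp π.symm fun i => L φ (v i)]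
  · obtain ⟨i, hi⟩ := not_forall.1 hv
    rw [Set.eq_empty_of_forall_notMem fun ω (h : ∀ j, Z (π j) ω = v j) => hi (h i ▸ hZ _ ω),
      Set.eq_empty_of_forall_notMem fun ω (h : ∀ j, Z j ω = v j) => hi (h i ▸ hZ i ω)]

end Mixture

noncomputable def bernoulliLik (θ : ℝ) (b : ℕ) : ℝ := θ ^ b * (1 - θ) ^ (1 - b)

noncomputable def effectLik (ψ : ℝ × ℝ) (a b : ℕ) : ℝ :=
  bernoulliLik (if a = 0 then ψ.1 else ψ.2) b

/-- `φ = (θ, ψ₀, ψ₁)`: `θ` drives the cause `X`, and `ψₓ` the effect `Y` given `X = x`. -/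
noncomputable def pairLik (φ : ℝ × ℝ × ℝ) (p : ℕ × ℕ) : ℝ :=
  effectLik φ.2 p.1 p.2 * bernoulliLik φ.1 p.1

theorem bernoulliLik_nonneg {θ : ℝ} (hθ : θ ∈ Set.Icc (0 : ℝ) 1) (b : ℕ) :
    0 ≤ bernoulliLik θ b :=
  mul_nonneg (pow_nonneg hθ.1 _) (pow_nonneg (sub_nonneg.2 hθ.2) _)

theorem sum_bernoulliLik (θ : ℝ) : ∑ b ∈ range 2, bernoulliLik θ b = 1 := by
  simp [bernoulliLik, sum_range_succ]

theorem sum_effectLik (ψ : ℝ × ℝ) (a : ℕ) : ∑ b ∈ range 2, effectLik ψ a b = 1 :=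
  sum_bernoulliLik _

theorem pairLik_nonneg {φ : ℝ × ℝ × ℝ}
    (hφ : φ.1 ∈ Set.Icc (0 : ℝ) 1 ∧ φ.2 ∈ Set.Icc (0 : ℝ) 1 ×ˢ Set.Icc (0 : ℝ) 1) (p : ℕ × ℕ) :
    0 ≤ pairLik φ p := by
  refine mul_nonneg ?_ (bernoulliLik_nonneg hφ.1 _)
  unfold effectLik
  split_ifs
  exacts [bernoulliLik_nonneg hφ.2.1 _, bernoulliLik_nonneg hφ.2.2 _]

theorem sum_pairLik (φ : ℝ × ℝ × ℝ) : ∑ p ∈ range 2 ×ˢ range 2, pairLik φ p = 1 := by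
  simp only [sum_product, pairLik, ← sum_mul, sum_effectLik, one_mul, sum_bernoulliLik]

theorem measurable_pairLik (p : ℕ × ℕ) : Measurable fun φ => pairLik φ p := by
  unfold pairLik effectLik bernoulliLik
  split_ifs <;> fun_prop

theorem ae_mem_unitCube {ν₁ : Measure ℝ} {ν₂ : Measure (ℝ × ℝ)} [SFinite ν₂]
    (hν₁ : ν₁ (Set.Icc (0:ℝ) 1)ᶜ = 0) (hν₂ : ν₂ (Set.Icc (0:ℝ) 1 ×ˢ Set.Icc (0:ℝ) 1)ᶜ = 0) :
    ∀ᵐ φ ∂ν₁.prod ν₂, φ.1 ∈ Set.Icc (0 : ℝ) 1 ∧ φ.2 ∈ Set.Icc (0 : ℝ) 1 ×ˢ Set.Icc (0 : ℝ) 1 :=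
  (Measure.quasiMeasurePreserving_fst.ae (mem_ae_iff.2 hν₁)).and
    (Measure.quasiMeasurePreserving_snd.ae (mem_ae_iff.2 hν₂))

theorem integral_integral_prod_pairLik (ν₁ : Measure ℝ) (ν₂ : Measure (ℝ × ℝ)) [SFinite ν₁]
    [SFinite ν₂] {N : ℕ} (v : Fin N → ℕ × ℕ) :
    ∫ θ, ∫ ψ, ∏ k, pairLik (θ, ψ) (v k) ∂ν₂ ∂ν₁ = ∫ φ, ∏ k, pairLik φ (v k) ∂ν₁.prod ν₂ := by
  simp only [pairLik, prod_mul_distrib, integral_mul_const]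
  rw [integral_const_mul, mul_comm]
  simp_rw [mul_comm (∏ k, effectLik _ _ _)]
  rw [integral_prod_mul (fun θ => ∏ k, bernoulliLik θ (v k).1)
    (fun ψ => ∏ k, effectLik ψ (v k).1 (v k).2)]

theorem prod_dite_lt_eq_prod {M : Type*} [CommMonoid M] {n m : ℕ} (hnm : n ≤ m) (f : Fin n → M) :
    ∏ k : Fin m, (if h : (k : ℕ) < n then f ⟨k, h⟩ else 1) = ∏ k, f k := by
  rw [prod_fin_eq_prod_range f,
    Fin.prod_univ_eq_prod_range (fun i => if h : i < n then f ⟨i, h⟩ else 1) m]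
  exact (prod_subset (range_subset_range.2 hnm) fun i _ hi => dif_neg (by simpa using hi)).symm

def prefixCylinder {m n : ℕ} (x : Fin m → ℕ) (y : Fin n → ℕ) (k : Fin m) : Finset (ℕ × ℕ) :=
  if h : (k : ℕ) < n then {(x k, y ⟨k, h⟩)} else {x k} ×ˢ range 2

theorem prefixCylinder_subset {m n : ℕ} {x : Fin m → ℕ} {y : Fin n → ℕ} (hx : ∀ k, x k ≤ 1)
    (hy : ∀ k, y k ≤ 1) (k : Fin m) : prefixCylinder x y k ⊆ range 2 ×ˢ range 2 := by
  unfold prefixCylinder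
  split_ifs <;> simp [subset_iff, hx, hy]

theorem setOf_prefix_eq_setOf_mem_prefixCylinder {Ω : Type*} {X Y : ℕ → Ω → ℕ}
    (hbinY : ∀ i ω, Y i ω ≤ 1) {m n : ℕ} (hnm : n ≤ m) {x : Fin m → ℕ} {y : Fin n → ℕ} :
    {ω | (∀ k : Fin n, Y k ω = y k) ∧ ∀ k : Fin m, X k ω = x k} =
      {ω | ∀ k : Fin m, (X k ω, Y k ω) ∈ prefixCylinder x y k} := by
  ext ω
  simp only [Set.mem_ofPred_eq, prefixCylinder]
  refine ⟨fun ⟨hY, hX⟩ k => ?_, fun h => ⟨fun k => ?_, fun k => ?_⟩⟩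
  · split_ifs with hk
    · simp [hX k, ← hY ⟨k, hk⟩]
    · simp [hX k, hbinY]
  · have hk := h (k.castLE hnm)
    simp only [Fin.val_castLE, k.isLt, dif_pos, mem_singleton, Prod.ext_iff] at hk
    exact hk.2
  · specialize h k
    split_ifs at h <;> simp_all

theorem prod_sum_prefixCylinder_pairLik {m n : ℕ} (hnm : n ≤ m) {x : Fin m → ℕ}
    {y : Fin n → ℕ} (φ : ℝ × ℝ × ℝ) :
    ∏ k, ∑ p ∈ prefixCylinder x y k, pairLik φ p =
      (∏ k, bernoulliLik φ.1 (x k)) * ∏ k : Fin n, effectLik φ.2 (x (k.castLE hnm)) (y k) := by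
  have hk : ∀ k, ∑ p ∈ prefixCylinder x y k, pairLik φ p =
      bernoulliLik φ.1 (x k) *
        if h : (k : ℕ) < n then effectLik φ.2 (x k) (y ⟨k, h⟩) else 1 := by
    intro k
    unfold prefixCylinder
    split_ifs
    · simp [pairLik, mul_comm]
    · simp only [sum_product, sum_singleton, pairLik, ← sum_mul, sum_effectLik, one_mul, mul_one]
  simp_rw [hk, prod_mul_distrib]
  exact congrArg _ (prod_dite_lt_eq_prod hnm fun k => effectLik φ.2 (x (k.castLE hnm)) (y k))

section Bivariate

variable {Ω : Type*} [MeasurableSpace Ω] {μ : Measure Ω} {X Y : ℕ → Ω → ℕ}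
  {ν₁ : Measure ℝ} {ν₂ : Measure (ℝ × ℝ)}

theorem measure_pairs_eq_integral_pairLik [SFinite ν₁] [SFinite ν₂]
    (hrep : ∀ (N : ℕ) (x y : Fin N → ℕ), (∀ n, x n ≤ 1) → (∀ n, y n ≤ 1) →
      μ {ω | ∀ n : Fin N, X n ω = x n ∧ Y n ω = y n} =
        ENNReal.ofReal (∫ θ, ∫ ψ,
          ∏ n, ((if x n = 0 then ψ.1 else ψ.2) ^ (y n) *
              (1 - if x n = 0 then ψ.1 else ψ.2) ^ (1 - y n) *
              (θ ^ (x n) * (1 - θ) ^ (1 - x n))) ∂ν₂ ∂ν₁))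
    {N : ℕ} (v : Fin N → ℕ × ℕ) (hv : ∀ k, v k ∈ range 2 ×ˢ range 2) :
    μ {ω | ∀ k : Fin N, (X k ω, Y k ω) = v k} =
      ENNReal.ofReal (∫ φ, ∏ k, pairLik φ (v k) ∂ν₁.prod ν₂) := by
  have hv' : ∀ k, (v k).1 ≤ 1 ∧ (v k).2 ≤ 1 := fun k => by
    simpa [Nat.lt_succ_iff] using hv k
  rw [← integral_integral_prod_pairLik]
  simp only [Prod.ext_iff]
  exact hrep N (fun k => (v k).1) (fun k => (v k).2) (fun k => (hv' k).1) fun k => (hv' k).2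

theorem measure_prefix_eq [IsProbabilityMeasure μ] [IsProbabilityMeasure ν₁]
    [IsProbabilityMeasure ν₂] (hbinX : ∀ i ω, X i ω ≤ 1) (hbinY : ∀ i ω, Y i ω ≤ 1)
    (hν₁ : ν₁ (Set.Icc (0:ℝ) 1)ᶜ = 0) (hν₂ : ν₂ (Set.Icc (0:ℝ) 1 ×ˢ Set.Icc (0:ℝ) 1)ᶜ = 0)
    {m : ℕ} (hatom : ∀ v : Fin m → ℕ × ℕ, (∀ k, v k ∈ range 2 ×ˢ range 2) →
      μ {ω | ∀ k : Fin m, (X k ω, Y k ω) = v k} =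
        ENNReal.ofReal (∫ φ, ∏ k, pairLik φ (v k) ∂ν₁.prod ν₂))
    {n : ℕ} (hnm : n ≤ m) (x : Fin m → ℕ) (y : Fin n → ℕ) (hx : ∀ k, x k ≤ 1)
    (hy : ∀ k, y k ≤ 1) :
    μ {ω | (∀ k : Fin n, Y k ω = y k) ∧ ∀ k : Fin m, X k ω = x k} =
      ENNReal.ofReal (∫ θ, ∏ k, bernoulliLik θ (x k) ∂ν₁) *
        ENNReal.ofReal (∫ ψ, ∏ k : Fin n, effectLik ψ (x (k.castLE hnm)) (y k) ∂ν₂) := by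
  have hθ : ∀ᵐ θ ∂ν₁, θ ∈ Set.Icc (0 : ℝ) 1 := mem_ae_iff.2 hν₁
  have hL_nonneg : ∀ᵐ φ ∂ν₁.prod ν₂, ∀ p ∈ range 2 ×ˢ range 2, 0 ≤ pairLik φ p :=
    (ae_mem_unitCube hν₁ hν₂).mono fun φ hφ p _ => pairLik_nonneg hφ p
  rw [setOf_prefix_eq_setOf_mem_prefixCylinder hbinY hnm,
    measure_forall_mem_eq_integral (Z := fun (k : Fin m) ω => (X k ω, Y k ω))
      (fun k ω => by simp [hbinX, hbinY]) measurable_pairLik hL_nonneg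
      (ae_of_all _ sum_pairLik) hatom _ (prefixCylinder_subset hx hy)]
  simp_rw [prod_sum_prefixCylinder_pairLik hnm]
  rw [integral_prod_mul (fun θ => ∏ k, bernoulliLik θ (x k))
      (fun ψ => ∏ k : Fin n, effectLik ψ (x (k.castLE hnm)) (y k)),
    ENNReal.ofReal_mul (integral_nonneg_of_ae (hθ.mono fun θ hθ =>
      prod_nonneg fun k _ => bernoulliLik_nonneg hθ _))]

theorem measure_forall_X_eq [IsProbabilityMeasure μ] [IsProbabilityMeasure ν₁]
    [IsProbabilityMeasure ν₂] (hbinX : ∀ i ω, X i ω ≤ 1) (hbinY : ∀ i ω, Y i ω ≤ 1)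
    (hν₁ : ν₁ (Set.Icc (0:ℝ) 1)ᶜ = 0) (hν₂ : ν₂ (Set.Icc (0:ℝ) 1 ×ˢ Set.Icc (0:ℝ) 1)ᶜ = 0)
    {m : ℕ} (hatom : ∀ v : Fin m → ℕ × ℕ, (∀ k, v k ∈ range 2 ×ˢ range 2) →
      μ {ω | ∀ k : Fin m, (X k ω, Y k ω) = v k} =
        ENNReal.ofReal (∫ φ, ∏ k, pairLik φ (v k) ∂ν₁.prod ν₂))
    (x : Fin m → ℕ) (hx : ∀ k, x k ≤ 1) :
    μ {ω | ∀ k : Fin m, X k ω = x k} = ENNReal.ofReal (∫ θ, ∏ k, bernoulliLik θ (x k) ∂ν₁) := by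
  simpa using measure_prefix_eq hbinX hbinY hν₁ hν₂ hatom (Nat.zero_le m) x Fin.elim0 hx
    fun k => k.elim0

theorem prefix_condIndep [IsProbabilityMeasure μ] [IsProbabilityMeasure ν₁]
    [IsProbabilityMeasure ν₂] (hbinX : ∀ i ω, X i ω ≤ 1) (hbinY : ∀ i ω, Y i ω ≤ 1)
    (hν₁ : ν₁ (Set.Icc (0:ℝ) 1)ᶜ = 0) (hν₂ : ν₂ (Set.Icc (0:ℝ) 1 ×ˢ Set.Icc (0:ℝ) 1)ᶜ = 0)
    (hatom : ∀ (m : ℕ) (v : Fin m → ℕ × ℕ), (∀ k, v k ∈ range 2 ×ˢ range 2) →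
      μ {ω | ∀ k : Fin m, (X k ω, Y k ω) = v k} =
        ENNReal.ofReal (∫ φ, ∏ k, pairLik φ (v k) ∂ν₁.prod ν₂))
    (n : ℕ) (x : Fin (n + 1) → ℕ) (y : Fin n → ℕ) :
    μ {ω | (∀ k : Fin n, Y k ω = y k) ∧ ∀ k : Fin (n + 1), X k ω = x k} *
        μ {ω | ∀ k : Fin n, X k ω = x k.castSucc} =
      μ {ω | (∀ k : Fin n, Y k ω = y k) ∧ ∀ k : Fin n, X k ω = x k.castSucc} *
        μ {ω | ∀ k : Fin (n + 1), X k ω = x k} := by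
  by_cases hx : ∀ k, x k ≤ 1
  swap
  · obtain ⟨i, hi⟩ := not_forall.1 hx
    have hX : {ω | ∀ k : Fin (n + 1), X k ω = x k} = ∅ :=
      Set.eq_empty_of_forall_notMem fun ω (h : ∀ k : Fin (n + 1), X k ω = x k) =>
        hi (h i ▸ hbinX i ω)
    have hYX : {ω | (∀ k : Fin n, Y k ω = y k) ∧ ∀ k : Fin (n + 1), X k ω = x k} = ∅ :=
      Set.eq_empty_of_forall_notMem fun ω h => hi (h.2 i ▸ hbinX i ω)
    simp [hX, hYX]
  by_cases hy : ∀ k, y k ≤ 1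
  swap
  · obtain ⟨i, hi⟩ := not_forall.1 hy
    have hYX : {ω | (∀ k : Fin n, Y k ω = y k) ∧ ∀ k : Fin (n + 1), X k ω = x k} = ∅ :=
      Set.eq_empty_of_forall_notMem fun ω h => hi (h.1 i ▸ hbinY i ω)
    have hYX' : {ω | (∀ k : Fin n, Y k ω = y k) ∧ ∀ k : Fin n, X k ω = x k.castSucc} = ∅ :=
      Set.eq_empty_of_forall_notMem fun ω h => hi (h.1 i ▸ hbinY i ω)
    simp [hYX, hYX']
  have hQ : ∫ ψ, ∏ k : Fin n, effectLik ψ (x (k.castLE (Nat.le_succ n))) (y k) ∂ν₂ =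
      ∫ ψ, ∏ k : Fin n, effectLik ψ (x (k.castLE le_rfl).castSucc) (y k) ∂ν₂ := rfl
  rw [measure_prefix_eq hbinX hbinY hν₁ hν₂ (hatom _) (Nat.le_succ n) x y hx hy,
    measure_prefix_eq hbinX hbinY hν₁ hν₂ (hatom _) le_rfl _ y (fun k => hx _) hy,
    measure_forall_X_eq hbinX hbinY hν₁ hν₂ (hatom _) x hx,
    measure_forall_X_eq hbinX hbinY hν₁ hν₂ (hatom _) _ fun k => hx _, hQ]
  ring

end Bivariate

end CausalDeFinetti

open CausalDeFinetti

/-- Converse bivariate Causal de Finetti: if the joint law of the binary pairs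
(Xₙ, Yₙ) is a mixture over independent parameters θ (for P(X)) and ψ = (ψ₀, ψ₁)
(for P(Y|X)), then (a) the sequence of pairs is exchangeable and
(b) Y_{[n]} ⟂ X_{n+1} | X_{[n]} for every n. -/
theorem stmt16 {Ω : Type*} [MeasurableSpace Ω] (μ : Measure Ω) [IsProbabilityMeasure μ]
    (X Y : ℕ → Ω → ℕ) (hbinX : ∀ i ω, X i ω ≤ 1) (hbinY : ∀ i ω, Y i ω ≤ 1)
    (ν₁ : Measure ℝ) [IsProbabilityMeasure ν₁]
    (ν₂ : Measure (ℝ × ℝ)) [IsProbabilityMeasure ν₂]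
    (hν₁ : ν₁ (Set.Icc (0:ℝ) 1)ᶜ = 0)
    (hν₂ : ν₂ (Set.Icc (0:ℝ) 1 ×ˢ Set.Icc (0:ℝ) 1)ᶜ = 0)
    (hrep : ∀ (N : ℕ) (x y : Fin N → ℕ), (∀ n, x n ≤ 1) → (∀ n, y n ≤ 1) →
      μ {ω | ∀ n : Fin N, X n ω = x n ∧ Y n ω = y n} =
        ENNReal.ofReal (∫ θ, ∫ ψ,
          ∏ n, ((if x n = 0 then ψ.1 else ψ.2) ^ (y n) *
              (1 - if x n = 0 then ψ.1 else ψ.2) ^ (1 - y n) *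
              (θ ^ (x n) * (1 - θ) ^ (1 - x n))) ∂ν₂ ∂ν₁)) :
    (∀ (N : ℕ) (π : Equiv.Perm (Fin N)) (x y : Fin N → ℕ),
        μ {ω | ∀ n : Fin N, X (π n) ω = x n ∧ Y (π n) ω = y n} =
          μ {ω | ∀ n : Fin N, X n ω = x n ∧ Y n ω = y n}) ∧
      (∀ (n : ℕ) (x : Fin (n + 1) → ℕ) (y : Fin n → ℕ),
        μ {ω | (∀ k : Fin n, Y k ω = y k) ∧ ∀ k : Fin (n + 1), X k ω = x k} *
            μ {ω | ∀ k : Fin n, X k ω = x k.castSucc} =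
          μ {ω | (∀ k : Fin n, Y k ω = y k) ∧ ∀ k : Fin n, X k ω = x k.castSucc} *
            μ {ω | ∀ k : Fin (n + 1), X k ω = x k}) := by
  have hatom : ∀ (m : ℕ) (v : Fin m → ℕ × ℕ), (∀ k, v k ∈ range 2 ×ˢ range 2) →
      μ {ω | ∀ k : Fin m, (X k ω, Y k ω) = v k} =
        ENNReal.ofReal (∫ φ, ∏ k, pairLik φ (v k) ∂ν₁.prod ν₂) :=
    fun _ => measure_pairs_eq_integral_pairLik hrep
  refine ⟨fun N π x y => ?_, prefix_condIndep hbinX hbinY hν₁ hν₂ hatom⟩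
  have hZ : ∀ (k : Fin N) ω, (X k ω, Y k ω) ∈ range 2 ×ˢ range 2 := fun k ω => by
    simp [hbinX, hbinY]
  simpa only [Prod.ext_iff] using measure_comp_perm_eq hZ (hatom N) π fun k => (x k, y k)
end

section
/- In the generative model where θ_e, ψ_e are independent random variables in [0,1], X^e is Bernoulli(θ_e), B^e is Bernoulli(ψ_e) independent of X^e given (θ_e, ψ_e), and Y^e = B^e XOR X^e, two samples (X_1^e, Y_1^e), (X_2^e, Y_2^e) drawn conditionally i.i.d. given (θ_e, ψ_e) satisfy: X_1^e is conditionally independent of Y_2^e given X_2^e. -/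
/-!
Encode each sample by its cause bit `X` and its noise bit `B = X + Y` in `Fin 2`. In these
coordinates the mass of every atom factors as `Θ x * Ψ z`, with `Θ`, `Ψ` the exchangeable
Bernoulli mixtures of `μθ`, `μψ`, so the cause bits are independent of the noise bits. Given
`X₂ = c`, the event `Y₂ = d` is the noise event `B₂ = c + d`; hence each of the four
probabilities is a `Θ`-mass of a cause event times a `Ψ`-mass of a noise event, and both sides
of the identity are the same product of four such masses.

The `X n`, `Y n` are not assumed measurable, so the mass of a union of atoms is not additive a
priori; it is pinned down by subadditivity of the outer measure together with the atom masses
summing to one.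
-/

open MeasureTheory
open scoped ENNReal

universe u v w

section FiberBounds

open Finset

variable {Ω : Type u} {ι : Type v} [MeasurableSpace Ω] {ν : Measure Ω}

lemma measure_preimage_le_sum_fiber (o : Ω → ι) (s : Finset ι) :
    ν (o ⁻¹' s) ≤ ∑ i ∈ s, ν (o ⁻¹' {i}) := by
  rw [← Set.biUnion_preimage_singleton]
  exact measure_biUnion_finset_le s _

lemma measure_preimage_eq_sum_of_fiber_le [IsFiniteMeasure ν] [Fintype ι] (o : Ω → ι)
    (w : ι → ℝ≥0∞) (hw : ∀ i, ν (o ⁻¹' {i}) ≤ w i) (hsum : ∑ i, w i = ν Set.univ)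
    (p : ι → Prop) [DecidablePred p] :
    ν (o ⁻¹' {i | p i}) = ∑ i with p i, w i := by
  have hle : ∀ (q : ι → Prop) [DecidablePred q], ν (o ⁻¹' {i | q i}) ≤ ∑ i with q i, w i :=
    fun q _ => by
      simpa using (measure_preimage_le_sum_fiber o {i | q i}).trans (sum_le_sum fun i _ => hw i)
  refine le_antisymm (hle p) (ENNReal.le_of_add_le_add_right (a := ∑ i with ¬p i, w i) ?_ ?_)
  · exact ne_top_of_le_ne_top (measure_ne_top ν Set.univ)
      (hsum ▸ sum_le_univ_sum_of_nonneg fun _ => zero_le)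
  calc ∑ i with p i, w i + ∑ i with ¬p i, w i = ν (o ⁻¹' {i | p i} ∪ o ⁻¹' {i | ¬p i}) := by
        rw [sum_filter_add_sum_filter_not, hsum, ← Set.preimage_union, ← Set.ofPred_or]
        simp only [em, Set.ofPred_true, Set.preimage_univ]
    _ ≤ _ := (measure_union_le _ _).trans (add_le_add_right (hle _) _)

lemma measure_preimage_prod_eq_mul_of_fiber_le [IsFiniteMeasure ν] {α : Type v} {β : Type w}
    [Fintype α] [Fintype β] (o : Ω → α × β) (u : α → ℝ≥0∞) (v : β → ℝ≥0∞)
    (hw : ∀ i j, ν (o ⁻¹' {(i, j)}) ≤ u i * v j)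
    (hsum : (∑ i, u i) * ∑ j, v j = ν Set.univ) (p : α → Prop) (q : β → Prop)
    [DecidablePred p] [DecidablePred q] :
    ν {ω | p (o ω).1 ∧ q (o ω).2} = (∑ i with p i, u i) * ∑ j with q j, v j := by
  have := measure_preimage_eq_sum_of_fiber_le o (fun ij => u ij.1 * v ij.2)
    (fun ij => hw ij.1 ij.2) (by rw [← hsum, Fintype.sum_mul_sum, Fintype.sum_prod_type])
    (fun ij => p ij.1 ∧ q ij.2)
  rw [Set.preimage_ofPred_eq] at this
  rw [this, sum_mul_sum, ← sum_product', ← filter_product, univ_product_univ]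

end FiberBounds

def bernoulliLik (t : ℝ) (k : ℕ) : ℝ := t ^ k * (1 - t) ^ (1 - k)

lemma bernoulliLik_mem_Icc {t : ℝ} (ht : t ∈ Set.Icc (0:ℝ) 1) (k : ℕ) :
    bernoulliLik t k ∈ Set.Icc (0:ℝ) 1 := by
  obtain ⟨h0, h1⟩ := ht
  have h1' : 0 ≤ 1 - t := by linarith
  exact ⟨by unfold bernoulliLik; positivity,
    mul_le_one₀ (pow_le_one₀ h0 h1) (by positivity) (pow_le_one₀ h1' (by linarith))⟩

lemma sum_bernoulliLik (t : ℝ) : ∑ k : Fin 2, bernoulliLik t k = 1 := by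
  simp [bernoulliLik]

section Mixture

open Finset

variable {ι : Type u} [Fintype ι]

noncomputable def bernoulliMixture (ν : Measure ℝ) (x : ι → Fin 2) : ℝ :=
  ∫ t, ∏ n, bernoulliLik t (x n) ∂ν

variable {ν : Measure ℝ}

lemma bernoulliMixture_nonneg (hν : ∀ᵐ t ∂ν, t ∈ Set.Icc (0:ℝ) 1) (x : ι → Fin 2) :
    0 ≤ bernoulliMixture ν x :=
  integral_nonneg_of_ae <| hν.mono fun _ ht =>
    prod_nonneg fun _ _ => (bernoulliLik_mem_Icc ht _).1

lemma integrable_prod_bernoulliLik [IsFiniteMeasure ν] (hν : ∀ᵐ t ∂ν, t ∈ Set.Icc (0:ℝ) 1)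
    (x : ι → Fin 2) :
    Integrable (fun t => ∏ n, bernoulliLik t (x n)) ν :=
  .of_bound (by unfold bernoulliLik; fun_prop) 1 <| hν.mono fun _ ht => by
    rw [Real.norm_of_nonneg (prod_nonneg fun _ _ => (bernoulliLik_mem_Icc ht _).1)]
    exact prod_le_one (fun _ _ => (bernoulliLik_mem_Icc ht _).1)
      fun _ _ => (bernoulliLik_mem_Icc ht _).2

lemma sum_bernoulliMixture [DecidableEq ι] [IsProbabilityMeasure ν]
    (hν : ∀ᵐ t ∂ν, t ∈ Set.Icc (0:ℝ) 1) : ∑ x : ι → Fin 2, bernoulliMixture ν x = 1 := by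
  simp only [bernoulliMixture]
  rw [← integral_finsetSum _ fun x _ => integrable_prod_bernoulliLik hν x]
  have hone (t : ℝ) : ∑ x : ι → Fin 2, ∏ n, bernoulliLik t (x n) = 1 := by
    rw [← Fintype.prod_sum fun (_ : ι) (k : Fin 2) => bernoulliLik t k]
    simp only [sum_bernoulliLik, prod_const_one]
  simp [hone]

lemma sum_ofReal_bernoulliMixture [DecidableEq ι] [IsProbabilityMeasure ν]
    (hν : ∀ᵐ t ∂ν, t ∈ Set.Icc (0:ℝ) 1) :
    ∑ x : ι → Fin 2, ENNReal.ofReal (bernoulliMixture ν x) = 1 := by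
  rw [← ENNReal.ofReal_sum_of_nonneg fun x _ => bernoulliMixture_nonneg hν x,
    sum_bernoulliMixture hν, ENNReal.ofReal_one]

lemma integral_integral_prod_bernoulliLik (μθ μψ : Measure ℝ) (x z : ι → Fin 2) :
    ∫ t, ∫ s, ∏ n, (bernoulliLik t (x n) * bernoulliLik s (z n)) ∂μψ ∂μθ =
      bernoulliMixture μθ x * bernoulliMixture μψ z := by
  simp_rw [prod_mul_distrib, integral_const_mul, integral_mul_const, bernoulliMixture]

end Mixture

def bitsOf {ι : Type u} {Ω : Type v} (X : ι → Ω → ℕ) (hX : ∀ n ω, X n ω ≤ 1) (ω : Ω) :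
    ι → Fin 2 :=
  fun n => ⟨X n ω, Nat.lt_succ_of_le (hX n ω)⟩

lemma bitsOf_eq_iff {ι : Type u} {Ω : Type v} {X : ι → Ω → ℕ} (hX : ∀ n ω, X n ω ≤ 1) {ω : Ω}
    {n : ι} {a : Fin 2} : bitsOf X hX ω n = a ↔ X n ω = a :=
  Fin.ext_iff

def causeNoise {ι : Type u} {Ω : Type v} (X Y : ι → Ω → ℕ) (hX : ∀ n ω, X n ω ≤ 1)
    (hY : ∀ n ω, Y n ω ≤ 1) (ω : Ω) : (ι → Fin 2) × (ι → Fin 2) :=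
  (bitsOf X hX ω, bitsOf X hX ω + bitsOf Y hY ω)

lemma measure_causeNoise_fiber {ι : Type u} [Fintype ι] {Ω : Type v} [MeasurableSpace Ω]
    (μ : Measure Ω) (X Y : ι → Ω → ℕ) (hX : ∀ n ω, X n ω ≤ 1) (hY : ∀ n ω, Y n ω ≤ 1)
    {μθ : Measure ℝ} (μψ : Measure ℝ) (hθ : ∀ᵐ t ∂μθ, t ∈ Set.Icc (0:ℝ) 1)
    (hrep : ∀ x y : ι → ℕ, (∀ n, x n ≤ 1) → (∀ n, y n ≤ 1) →
      μ {ω | ∀ n, X n ω = x n ∧ Y n ω = y n} =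
        ENNReal.ofReal (∫ t, ∫ s,
          ∏ n, (t ^ (x n) * (1 - t) ^ (1 - x n) *
            (s ^ ((x n + y n) % 2) * (1 - s) ^ (1 - (x n + y n) % 2))) ∂μψ ∂μθ))
    (x z : ι → Fin 2) :
    μ (causeNoise X Y hX hY ⁻¹' {(x, z)}) =
      ENNReal.ofReal (bernoulliMixture μθ x) * ENNReal.ofReal (bernoulliMixture μψ z) := by
  have hfiber : causeNoise X Y hX hY ⁻¹' {(x, z)} =
      {ω | ∀ n, X n ω = x n ∧ Y n ω = (z - x) n} := by
    ext ω
    simp only [causeNoise, Set.mem_preimage, Set.mem_singleton_iff, Prod.mk.injEq,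
      Set.mem_ofPred_eq, ← bitsOf_eq_iff hX, ← bitsOf_eq_iff hY, forall_and, ← funext_iff]
    exact and_congr_right fun h => by rw [h, eq_sub_iff_add_eq']
  rw [hfiber, hrep _ _ (fun n => Fin.is_le (x n)) (fun n => Fin.is_le ((z - x) n)),
    ← ENNReal.ofReal_mul (bernoulliMixture_nonneg hθ x), ← integral_integral_prod_bernoulliLik]
  simp only [← Fin.val_add, Pi.sub_apply, add_sub_cancel]
  rfl

/-- In the XOR generative model (X = Ber(θₑ), Y = Ber(ψₑ) ⊕ X, two conditionally
i.i.d. samples per environment, θₑ ⟂ ψₑ), the first sample's cause X₁ is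
conditionally independent of the second sample's effect Y₂ given X₂. -/
theorem stmt17 {Ω : Type*} [MeasurableSpace Ω] (μ : Measure Ω) [IsProbabilityMeasure μ]
    (X Y : Fin 2 → Ω → ℕ) (hbinX : ∀ n ω, X n ω ≤ 1) (hbinY : ∀ n ω, Y n ω ≤ 1)
    (μθ μψ : Measure ℝ) [IsProbabilityMeasure μθ] [IsProbabilityMeasure μψ]
    (hθ : μθ (Set.Icc (0:ℝ) 1)ᶜ = 0) (hψ : μψ (Set.Icc (0:ℝ) 1)ᶜ = 0)
    (hrep : ∀ x y : Fin 2 → ℕ, (∀ n, x n ≤ 1) → (∀ n, y n ≤ 1) →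
      μ {ω | ∀ n, X n ω = x n ∧ Y n ω = y n} =
        ENNReal.ofReal (∫ t, ∫ s,
          ∏ n, (t ^ (x n) * (1 - t) ^ (1 - x n) *
            (s ^ ((x n + y n) % 2) * (1 - s) ^ (1 - (x n + y n) % 2))) ∂μψ ∂μθ)) :
    ∀ x₁ x₂ y₂ : ℕ, x₁ ≤ 1 → x₂ ≤ 1 → y₂ ≤ 1 →
      μ {ω | X 0 ω = x₁ ∧ X 1 ω = x₂ ∧ Y 1 ω = y₂} * μ {ω | X 1 ω = x₂} =
        μ {ω | X 0 ω = x₁ ∧ X 1 ω = x₂} * μ {ω | X 1 ω = x₂ ∧ Y 1 ω = y₂} := by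
  intro x₁ x₂ y₂ hx₁ hx₂ hy₂
  obtain ⟨a, rfl⟩ : ∃ a : Fin 2, (a : ℕ) = x₁ := ⟨⟨x₁, by omega⟩, rfl⟩
  obtain ⟨c, rfl⟩ : ∃ c : Fin 2, (c : ℕ) = x₂ := ⟨⟨x₂, by omega⟩, rfl⟩
  obtain ⟨d, rfl⟩ : ∃ d : Fin 2, (d : ℕ) = y₂ := ⟨⟨y₂, by omega⟩, rfl⟩
  have hθ' : ∀ᵐ t ∂μθ, t ∈ Set.Icc (0:ℝ) 1 := mem_ae_iff.2 hθ
  have hψ' : ∀ᵐ s ∂μψ, s ∈ Set.Icc (0:ℝ) 1 := mem_ae_iff.2 hψ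
  have hmass := measure_preimage_prod_eq_mul_of_fiber_le (causeNoise X Y hbinX hbinY) _ _
    (fun x z => (measure_causeNoise_fiber μ X Y hbinX hbinY μψ hθ' hrep x z).le)
    (by rw [sum_ofReal_bernoulliMixture hθ', sum_ofReal_bernoulliMixture hψ', one_mul,
      measure_univ])
  have hY (ω : Ω) : X 1 ω = c ∧ Y 1 ω = d ↔
      bitsOf X hbinX ω 1 = c ∧ (bitsOf X hbinX ω + bitsOf Y hbinY ω) 1 = c + d := by
    rw [← bitsOf_eq_iff hbinX, ← bitsOf_eq_iff hbinY]
    exact and_congr_right fun h => by rw [Pi.add_apply, h, add_right_inj]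
  have h1 := hmass (fun x => x 0 = a ∧ x 1 = c) (fun z => z 1 = c + d)
  have h2 := hmass (fun x => x 1 = c) (fun _ => True)
  have h3 := hmass (fun x => x 0 = a ∧ x 1 = c) (fun _ => True)
  have h4 := hmass (fun x => x 1 = c) (fun z => z 1 = c + d)
  simp only [causeNoise, and_true, and_assoc, ← hY] at h1 h2 h3 h4
  simp only [bitsOf_eq_iff] at h1 h2 h3 h4
  rw [h1, h2, h3, h4]
  ring
end
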